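/- (Propagation of the time-derivative bound from the contact set.) Let σ ∈ (0,2) and Q₁ = B₁×(−1,0]. Let Γ : cl(Q₁) → ℝ be continuous, concave in the space variable x and nondecreasing in time t, with Γ = 0 on the parabolic boundary ∂ₚQ₁ = (∂B₁×(−1,0]) ∪ (cl(B₁)×{−1}), and suppose Γ is C² in x and C¹ in t on Q₁. Let 𝒞 = {(x,t) ∈ Q₁ : det(D²ₓΓ(x,t)) ≠ 0}. If 0 ≤ ∂_tΓ ≤ M on 𝒞 for some M > 0, then 0 ≤ ∂_tΓ ≤ 2M on all of Q₁. -/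

import Mathlib

open MeasureTheory Set Metric Filter
open scoped RealInnerProductSpace Topology ENNReal Classical

noncomputable section

/-- ℝⁿ as a Euclidean space. -/
abbrev Eu (n : ℕ) : Type := EuclideanSpace ℝ (Fin n)

/-- Second-order symmetric difference μ(u,x,y,t) = u(x+y,t) + u(x−y,t) − 2u(x,t). -/
def pmu (n : ℕ) (u : Eu n → ℝ → ℝ) (x y : Eu n) (t : ℝ) : ℝ :=
  u (x + y) t + u (x - y) t - 2 * u x t

/-- Maximal Pucci-type extremal operator of order σ. -/
def MPlus (n : ℕ) (lam Lam σ : ℝ) (u : Eu n → ℝ → ℝ) (x : Eu n) (t : ℝ) : ℝ :=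
  (2 - σ) * ∫ y : Eu n,
    (Lam * max (pmu n u x y t) 0 - lam * max (-(pmu n u x y t)) 0) / ‖y‖ ^ ((n : ℝ) + σ)

/-- Minimal Pucci-type extremal operator of order σ. -/
def MMinus (n : ℕ) (lam Lam σ : ℝ) (u : Eu n → ℝ → ℝ) (x : Eu n) (t : ℝ) : ℝ :=
  (2 - σ) * ∫ y : Eu n,
    (lam * max (pmu n u x y t) 0 - Lam * max (-(pmu n u x y t)) 0) / ‖y‖ ^ ((n : ℝ) + σ)

/-- Parabolic cylinder Q_r(x,t) = B_r(x) × (t − r^σ, t]. -/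
def pQ (n : ℕ) (σ r : ℝ) (x : Eu n) (t : ℝ) : Set (Eu n × ℝ) :=
  ball x r ×ˢ Ioc (t - r ^ σ) t

/-- Viscosity subsolution of `Op u − u_t ≥ g` on `D`. -/
def IsViscSubsol (n : ℕ) (σ : ℝ) (Op : (Eu n → ℝ → ℝ) → Eu n → ℝ → ℝ)
    (u g : Eu n → ℝ → ℝ) (D : Set (Eu n × ℝ)) : Prop :=
  UpperSemicontinuousOn (fun p : Eu n × ℝ => u p.1 p.2) (closure D) ∧
  ∀ x t, (x, t) ∈ D → ∀ ρ > (0 : ℝ), pQ n σ ρ x t ⊆ D →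
    ∀ φ : Eu n → ℝ → ℝ,
      ContDiffOn ℝ 2 (fun p : Eu n × ℝ => φ p.1 p.2) (pQ n σ ρ x t) →
      φ x t = u x t →
      (∀ p ∈ pQ n σ ρ x t, p ≠ (x, t) → u p.1 p.2 < φ p.1 p.2) →
      Op (fun y s => if (y, s) ∈ pQ n σ ρ x t then φ y s else u y s) x t
        - deriv (fun s => φ x s) t ≥ g x t

/-- Viscosity supersolution of `Op u − u_t ≤ g` on `D`. -/
def IsViscSupersol (n : ℕ) (σ : ℝ) (Op : (Eu n → ℝ → ℝ) → Eu n → ℝ → ℝ)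
    (u g : Eu n → ℝ → ℝ) (D : Set (Eu n × ℝ)) : Prop :=
  LowerSemicontinuousOn (fun p : Eu n × ℝ => u p.1 p.2) (closure D) ∧
  ∀ x t, (x, t) ∈ D → ∀ ρ > (0 : ℝ), pQ n σ ρ x t ⊆ D →
    ∀ φ : Eu n → ℝ → ℝ,
      ContDiffOn ℝ 2 (fun p : Eu n × ℝ => φ p.1 p.2) (pQ n σ ρ x t) →
      φ x t = u x t →
      (∀ p ∈ pQ n σ ρ x t, p ≠ (x, t) → φ p.1 p.2 < u p.1 p.2) →
      Op (fun y s => if (y, s) ∈ pQ n σ ρ x t then φ y s else u y s) x t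
        - deriv (fun s => φ x s) t ≤ g x t

/-- Viscosity solution of `Op u − u_t = g` on `D`. -/
def IsViscSol (n : ℕ) (σ : ℝ) (Op : (Eu n → ℝ → ℝ) → Eu n → ℝ → ℝ)
    (u g : Eu n → ℝ → ℝ) (D : Set (Eu n × ℝ)) : Prop :=
  IsViscSubsol n σ Op u g D ∧ IsViscSupersol n σ Op u g D

/-- Concave in space and nondecreasing in time on Q₂ = B₂ × (−2^σ, 0]. -/
def pConcMono (n : ℕ) (σ : ℝ) (v : Eu n → ℝ → ℝ) : Prop :=
  (∀ t ∈ Ioc (-(2 : ℝ) ^ σ) (0 : ℝ), ConcaveOn ℝ (ball (0 : Eu n) 2) (fun x => v x t)) ∧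
  (∀ x ∈ ball (0 : Eu n) 2, MonotoneOn (fun t => v x t) (Ioc (-(2 : ℝ) ^ σ) (0 : ℝ)))

/-- Concave envelope of u in Q₂ (zero outside Q₂). -/
def concEnv (n : ℕ) (σ : ℝ) (u : Eu n → ℝ → ℝ) (y : Eu n) (s : ℝ) : ℝ :=
  if (y, s) ∈ pQ n σ 2 0 0 then
    sInf {z : ℝ | ∃ v : Eu n → ℝ → ℝ, pConcMono n σ v ∧
      (∀ p ∈ pQ n σ 2 0 0, max (u p.1 p.2) 0 < v p.1 p.2) ∧ z = v y s}
  else 0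

/-- Contact set 𝒞(u,Γ,Q₁). -/
def contactSet (n : ℕ) (σ : ℝ) (u : Eu n → ℝ → ℝ) : Set (Eu n × ℝ) :=
  {p ∈ pQ n σ 1 0 0 | u p.1 p.2 = concEnv n σ u p.1 p.2}

/-- Parabolic normal map 𝒩_w(A). -/
def normalMap (n : ℕ) (σ : ℝ) (w : Eu n → ℝ → ℝ) (A : Set (Eu n × ℝ)) : Set (Eu n × ℝ) :=
  {q | ∃ p ∈ A, q.2 = w p.1 p.2 - ⟪q.1, p.1⟫ ∧ w p.1 p.2 - ⟪q.1, p.1⟫ ≤ p.2 ∧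
       ∀ z ∈ pQ n σ 2 0 0, w z.1 z.2 ≤ w p.1 p.2 + ⟪q.1, z.1 - p.1⟫}

/-- Spatial superdifferential of w at (x,t) (relative to B₂). -/
def superDiff (n : ℕ) (w : Eu n → ℝ → ℝ) (x : Eu n) (t : ℝ) : Set (Eu n) :=
  {p | ∀ y ∈ ball (0 : Eu n) 2, w y t ≤ w x t + ⟪p, y - x⟫}

/-- Half-open (n+1)-dimensional cube with lower corner (a,b) and sidelength s. -/
def pCube (n : ℕ) (a : Eu n) (b s : ℝ) : Set (Eu n × ℝ) :=
  {p | (∀ i, p.1 i ∈ Ico (a i) (a i + s)) ∧ p.2 ∈ Ico b (b + s)}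

/-- The box 𝒦_r(x,t) = {(y,s) : max(|y₁−x₁|²,…,|yₙ−xₙ|²,|t−s|) < r²}. -/
def KBox (n : ℕ) (r : ℝ) (x : Eu n) (t : ℝ) : Set (Eu n × ℝ) :=
  {p | (∀ i, |p.1 i - x i| < r) ∧ |t - p.2| < r ^ 2}

/-- Hessian matrix of g : ℝⁿ → ℝ at x. -/
def hessMat (n : ℕ) (g : Eu n → ℝ) (x : Eu n) : Matrix (Fin n) (Fin n) ℝ :=
  Matrix.of fun i j =>
    iteratedFDeriv ℝ 2 g x ![EuclideanSpace.single i 1, EuclideanSpace.single j 1]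

/-- rK⁻_r = (−r,r)ⁿ × (0, r^σ]. -/
def rKm (n : ℕ) (σ r : ℝ) : Set (Eu n × ℝ) :=
  {x : Eu n | ∀ i, |x i| < r} ×ˢ Ioc (0 : ℝ) (r ^ σ)

/-- rK⁺_{3r} = (−3r,3r)ⁿ × (r^σ, (3^σ+2)·r^σ]. -/
def rKp (n : ℕ) (σ r : ℝ) : Set (Eu n × ℝ) :=
  {x : Eu n | ∀ i, |x i| < 3 * r} ×ˢ Ioc (r ^ σ) (((3 : ℝ) ^ σ + 2) * r ^ σ)

/-- bQ_r = B_r × (−r^σ, r^σ]. -/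
def bQ (n : ℕ) (σ r : ℝ) : Set (Eu n × ℝ) :=
  ball (0 : Eu n) r ×ˢ Ioc (-(r ^ σ)) (r ^ σ)

/-- rQ_r(x,t) = B_r(x) × (t, t + r^σ]. -/
def rQ (n : ℕ) (σ r : ℝ) (x : Eu n) (t : ℝ) : Set (Eu n × ℝ) :=
  ball x r ×ˢ Ioc t (t + r ^ σ)

/-- A symmetric kernel of order σ with ellipticity constants lam ≤ Lam. -/
def SymmKernel (n : ℕ) (lam Lam σ : ℝ) (K : Eu n → ℝ → ℝ) : Prop :=
  (∀ y t, K (-y) t = K y t) ∧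
  ∀ y : Eu n, y ≠ 0 → ∀ t,
    (2 - σ) * lam / ‖y‖ ^ ((n : ℝ) + σ) ≤ K y t ∧
    K y t ≤ (2 - σ) * Lam / ‖y‖ ^ ((n : ℝ) + σ)

/-- Isaacs operator I u = inf_β sup_α (L_{αβ} u + c_{αβ}). -/
def isaacs (n : ℕ) {A B : Type} (K : A → B → Eu n → ℝ → ℝ) (c : A → B → ℝ)
    (u : Eu n → ℝ → ℝ) (x : Eu n) (t : ℝ) : ℝ :=
  ⨅ b : B, ⨆ a : A, ((∫ y : Eu n, pmu n u x y t * K a b y t) + c a b)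

/-!
The lower bound is the monotonicity of `Γ` in time. For the upper bound, suppose
`∂ₜΓ(x₀,t₀) > 2M` and pick `t₁ < t₀` with `Γ(x₀,t₀) - Γ(x₀,t₁) > 2M (t₀ - t₁)`. The function
`Γ(y,s) - Γ(y,t₁) - 2M (s - t₁) + κ (‖y‖² - 1)` is `≤ 0` on the parabolic boundary of
`B₁ × [t₁,t₀]` but positive at `(x₀,t₀)` for small `κ > 0`, so it attains its maximum over the
cylinder at some `(x,s)` with `‖x‖ < 1` and `s > t₁`. There the left time derivative of `Γ` is at
least `2M`, while concavity of `Γ(·,t₁)` forces `D²ₓΓ(x,s) ≤ -2κ`, so `(x,s)` lies in the set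
where `det D²ₓΓ ≠ 0` and `∂ₜΓ ≤ M`.
-/

section SecondDifference

variable {E : Type*} [NormedAddCommGroup E] [NormedSpace ℝ E] {x : E} {ρ : ℝ}

theorem isLittleO_secondDiff_sub_fderiv_fderiv {F : Type*} [NormedAddCommGroup F]
    [NormedSpace ℝ F] {f : E → F} {f' : E → E →L[ℝ] F} {f'' : E →L[ℝ] E →L[ℝ] F} {v : E}
    (hf : ∀ y ∈ ball x ρ, HasFDerivAt f (f' y) y) (hx : HasFDerivAt f' f'' x) (hv : ‖v‖ < ρ) :
    (fun h : ℝ => f (x + h • v) + f (x - h • v) - (2 : ℝ) • f x - h ^ 2 • f'' v v)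
      =o[𝓝[>] 0] fun h => h ^ 2 := by
  have hρ : 0 < ρ := (norm_nonneg v).trans_lt hv
  have hs : interior (ball x ρ) = ball x ρ := isOpen_ball.interior_eq
  have taylor (w : E) (hw : ‖w‖ < ρ) := (convex_ball x ρ).taylor_approx_two_segment
    (v := 0) (w := w) (by rwa [hs]) (mem_ball_self hρ)
    (by rw [hs]; exact hx.hasFDerivWithinAt) (by simpa [hs] using hρ) (by simpa [hs] using hw)
  refine ((taylor v hv).add (taylor (-v) (by rwa [norm_neg]))).congr_left fun h => ?_
  simp only [smul_zero, add_zero, map_zero, map_neg, zero_apply, neg_apply, smul_neg,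
    ← sub_eq_add_neg]
  module

theorem fderiv_fderiv_apply_self_le_of_secondDiff_le {f : E → ℝ} {f' : E → E →L[ℝ] ℝ}
    {f'' : E →L[ℝ] E →L[ℝ] ℝ} {c : ℝ} (hρ : 0 < ρ)
    (hf : ∀ y ∈ ball x ρ, HasFDerivAt f (f' y) y) (hx : HasFDerivAt f' f'' x)
    (hsec : ∀ᶠ y in 𝓝 0, f (x + y) + f (x - y) - 2 * f x ≤ -(c * ‖y‖ ^ 2)) (v : E) :
    f'' v v ≤ -(c * ‖v‖ ^ 2) := by
  have hsmul (w : E) : Tendsto (fun h : ℝ => h • w) (𝓝[>] 0) (𝓝 0) := by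
    have hc : Continuous fun h : ℝ => h • w := continuous_id.smul continuous_const
    exact (hc.tendsto' 0 0 (zero_smul ℝ w)).mono_left nhdsWithin_le_nhds
  obtain ⟨ε, hεv, hε⟩ : ∃ ε, ‖ε • v‖ < ρ ∧ 0 < ε :=
    (((hsmul v).norm.eventually (gt_mem_nhds (by simpa using hρ))).and
      self_mem_nhdsWithin).exists
  suffices f'' (ε • v) (ε • v) ≤ -(c * ‖ε • v‖ ^ 2) by
    simp only [map_smul, smul_apply, smul_eq_mul, norm_smul,
      Real.norm_of_nonneg hε.le] at this
    nlinarith [pow_pos hε 2]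
  set w := ε • v
  have hlim : Tendsto (fun h => (f (x + h • w) + f (x - h • w) - 2 * f x) / h ^ 2) (𝓝[>] 0)
      (𝓝 (f'' w w)) := by
    have := ((isLittleO_secondDiff_sub_fderiv_fderiv hf hx hεv).tendsto_div_nhds_zero).add_const
      (f'' w w)
    rw [zero_add] at this
    refine this.congr' ?_
    filter_upwards [self_mem_nhdsWithin] with h (hh : 0 < h)
    field_simp
    simp only [smul_eq_mul]
    ring
  refine le_of_tendsto hlim ?_
  filter_upwards [(hsmul w).eventually hsec, self_mem_nhdsWithin] with h hh (hpos : 0 < h)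
  rw [div_le_iff₀ (by positivity)]
  rw [norm_smul, mul_pow, Real.norm_eq_abs, sq_abs] at hh
  linarith

end SecondDifference

theorem hessMat_eq_toMatrix {n : ℕ} (g : Eu n → ℝ) (x : Eu n) :
    hessMat n g x = LinearMap.BilinForm.toMatrix (EuclideanSpace.basisFun (Fin n) ℝ).toBasis
      (fderiv ℝ (fderiv ℝ g) x).toBilinForm := by
  ext i j
  simp [hessMat, LinearMap.BilinForm.toMatrix_apply, iteratedFDeriv_two_apply]

theorem hessMat_det_ne_zero_of_secondDiff_le {n : ℕ} {g : Eu n → ℝ} {U : Set (Eu n)}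
    {x : Eu n} {c : ℝ} (hU : IsOpen U) (hg : ContDiffOn ℝ 2 g U) (hx : x ∈ U) (hc : 0 < c)
    (hsec : ∀ᶠ y in 𝓝 0, g (x + y) + g (x - y) - 2 * g x ≤ -(c * ‖y‖ ^ 2)) :
    (hessMat n g x).det ≠ 0 := by
  obtain ⟨ρ, hρ, hball⟩ := Metric.isOpen_iff.1 hU x hx
  have hg' : ∀ y ∈ ball x ρ, HasFDerivAt g (fderiv ℝ g y) y := fun y hy =>
    ((hg.differentiableOn (by norm_num) y (hball hy)).differentiableAt
      (hU.mem_nhds (hball hy))).hasFDerivAt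
  have hg'' : HasFDerivAt (fderiv ℝ g) (fderiv ℝ (fderiv ℝ g) x) x :=
    (((hg.fderiv_of_isOpen (m := 1) hU (by norm_num)).differentiableOn one_ne_zero x
      hx).differentiableAt (hU.mem_nhds hx)).hasFDerivAt
  have hneg := fderiv_fderiv_apply_self_le_of_secondDiff_le hρ hg' hg'' hsec
  rw [hessMat_eq_toMatrix, ← LinearMap.BilinForm.nondegenerate_iff_det_ne_zero]
  refine .ofSeparatingLeft fun v hv => ?_
  by_contra hv0
  have hvv : fderiv ℝ (fderiv ℝ g) x v v = 0 := hv v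
  linarith [hneg v, mul_pos hc (pow_pos (norm_pos_iff.2 hv0) 2)]

section LeftDerivative

variable {φ : ℝ → ℝ} {φ' m s : ℝ}

theorem HasDerivWithinAt.le_of_eventually_le_sub (hφ : HasDerivWithinAt φ φ' (Iic s) s)
    (h : ∀ᶠ u in 𝓝[<] s, m * (s - u) ≤ φ s - φ u) : m ≤ φ' := by
  rw [hasDerivWithinAt_iff_tendsto_slope, Iic_sdiff_right] at hφ
  refine ge_of_tendsto hφ ?_
  filter_upwards [h, self_mem_nhdsWithin] with u hu (hus : u < s)
  rw [slope_def_field, le_div_iff_of_neg (sub_neg.2 hus)]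
  linarith

theorem HasDerivWithinAt.eventually_lt_sub (hφ : HasDerivWithinAt φ φ' (Iic s) s)
    (hm : m < φ') : ∀ᶠ u in 𝓝[<] s, m * (s - u) < φ s - φ u := by
  rw [hasDerivWithinAt_iff_tendsto_slope, Iic_sdiff_right] at hφ
  filter_upwards [hφ.eventually (lt_mem_nhds hm), self_mem_nhdsWithin] with u hu (hus : u < s)
  rw [slope_def_field, lt_div_iff_of_neg (sub_neg.2 hus)] at hu
  linarith

end LeftDerivative

theorem ConcaveOn.add_le_two_mul {E : Type*} [AddCommGroup E] [Module ℝ E] {S : Set E}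
    {f : E → ℝ} (hf : ConcaveOn ℝ S f) {x y : E} (hadd : x + y ∈ S) (hsub : x - y ∈ S) :
    f (x + y) + f (x - y) ≤ 2 * f x := by
  have := hf.2 hadd hsub (by norm_num : (0 : ℝ) ≤ 1 / 2) (by norm_num : (0 : ℝ) ≤ 1 / 2)
    (by norm_num)
  rw [show (1 / 2 : ℝ) • (x + y) + (1 / 2 : ℝ) • (x - y) = x by module] at this
  simp only [smul_eq_mul] at this
  linarith

section Penalization

variable {E : Type*} [NormedAddCommGroup E] {Γ : E → ℝ → ℝ} {x₀ : E} {t₀ t₁ m : ℝ}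

def penalizedIncrement (Γ : E → ℝ → ℝ) (t₁ m κ : ℝ) (y : E) (s : ℝ) : ℝ :=
  Γ y s - Γ y t₁ - m * (s - t₁) + κ * (‖y‖ ^ 2 - 1)

theorem exists_isMaxOn_penalizedIncrement [ProperSpace E]
    (hcont : ContinuousOn (fun p : E × ℝ => Γ p.1 p.2) (closedBall 0 1 ×ˢ Icc t₁ t₀))
    (hbdry : ∀ y ∈ sphere (0 : E) 1, ∀ s ∈ Icc t₁ t₀, Γ y s = 0) (hm : 0 ≤ m)
    (ht : t₁ ≤ t₀) (hx₀ : x₀ ∈ closedBall (0 : E) 1)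
    (hgap : m * (t₀ - t₁) < Γ x₀ t₀ - Γ x₀ t₁) :
    ∃ κ > 0, ∃ x ∈ ball (0 : E) 1, ∃ s ∈ Ioc t₁ t₀,
      IsMaxOn (Function.uncurry (penalizedIncrement Γ t₁ m κ)) (closedBall 0 1 ×ˢ Icc t₁ t₀)
        (x, s) := by
  set δ := Γ x₀ t₀ - Γ x₀ t₁ - m * (t₀ - t₁)
  have hδ : 0 < δ := by linarith
  set Z := Function.uncurry (penalizedIncrement Γ t₁ m (δ / 2))
  have hZ : ContinuousOn Z (closedBall 0 1 ×ˢ Icc t₁ t₀) := by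
    have hΓt₁ : ContinuousOn (fun p : E × ℝ => Γ p.1 t₁) (closedBall 0 1 ×ˢ Icc t₁ t₀) :=
      hcont.comp (continuous_fst.prodMk continuous_const).continuousOn
        fun p (hp : p ∈ closedBall 0 1 ×ˢ Icc t₁ t₀) => ⟨hp.1, le_rfl, ht⟩
    exact ((hcont.sub hΓt₁).sub (by fun_prop)).add (by fun_prop)
  obtain ⟨⟨x, s⟩, ⟨hx, hs⟩, hmax⟩ :=
    ((isCompact_closedBall 0 1).prod isCompact_Icc).exists_isMaxOn ⟨(x₀, t₀), hx₀, ht, le_rfl⟩ hZ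
  have hpos : 0 < Z (x, s) := by
    refine lt_of_lt_of_le ?_ (hmax ⟨hx₀, ht, le_rfl⟩)
    simp only [Z, Function.uncurry_apply_pair, penalizedIncrement]
    nlinarith [sq_nonneg ‖x₀‖]
  refine ⟨δ / 2, by positivity, x, ?_, s, ⟨hs.1.lt_of_ne ?_, hs.2⟩, hmax⟩
  · rw [mem_ball_zero_iff]
    refine (mem_closedBall_zero_iff.1 hx).lt_of_ne fun h => ?_
    have hsph : x ∈ sphere (0 : E) 1 := mem_sphere_zero_iff_norm.2 h
    simp only [Z, Function.uncurry_apply_pair, penalizedIncrement, hbdry x hsph s hs,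
      hbdry x hsph t₁ ⟨le_rfl, ht⟩, h] at hpos
    nlinarith [hs.1]
  · rintro rfl
    have hx1 : ‖x‖ ^ 2 ≤ 1 := pow_le_one₀ (norm_nonneg x) (mem_closedBall_zero_iff.1 hx)
    simp only [Z, Function.uncurry_apply_pair, penalizedIncrement] at hpos
    nlinarith

theorem exists_secondDiff_le_and_sub_le [InnerProductSpace ℝ E] [ProperSpace E]
    (hcont : ContinuousOn (fun p : E × ℝ => Γ p.1 p.2) (closedBall 0 1 ×ˢ Icc t₁ t₀))
    (hconc : ConcaveOn ℝ (closedBall 0 1) (fun y => Γ y t₁))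
    (hbdry : ∀ y ∈ sphere (0 : E) 1, ∀ s ∈ Icc t₁ t₀, Γ y s = 0) (hm : 0 ≤ m)
    (ht : t₁ ≤ t₀) (hx₀ : x₀ ∈ closedBall (0 : E) 1)
    (hgap : m * (t₀ - t₁) < Γ x₀ t₀ - Γ x₀ t₁) :
    ∃ x ∈ ball (0 : E) 1, ∃ s ∈ Ioc t₁ t₀,
      (∀ᶠ u in 𝓝[<] s, m * (s - u) ≤ Γ x s - Γ x u) ∧
      ∃ c > 0, ∀ᶠ y in 𝓝 0, Γ (x + y) s + Γ (x - y) s - 2 * Γ x s ≤ -(c * ‖y‖ ^ 2) := by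
  obtain ⟨κ, hκ, x, hx, s, hs, hmax⟩ :=
    exists_isMaxOn_penalizedIncrement hcont hbdry hm ht hx₀ hgap
  have hZ : ∀ y ∈ closedBall (0 : E) 1, ∀ u ∈ Icc t₁ t₀,
      penalizedIncrement Γ t₁ m κ y u ≤ penalizedIncrement Γ t₁ m κ x s :=
    fun y hy u hu => hmax (show (y, u) ∈ _ from ⟨hy, hu⟩)
  refine ⟨x, hx, s, hs, ?_, 2 * κ, by positivity, ?_⟩
  · filter_upwards [Ioo_mem_nhdsLT hs.1] with u hu
    have := hZ x (ball_subset_closedBall hx) u ⟨hu.1.le, hu.2.le.trans hs.2⟩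
    simp only [penalizedIncrement] at this
    linarith
  · have hnear : ∀ᶠ y in 𝓝 (0 : E), x + y ∈ ball (0 : E) 1 ∧ x - y ∈ ball (0 : E) 1 := by
      have hball := isOpen_ball.mem_nhds hx
      exact (((continuous_const.add continuous_id).tendsto' 0 x (add_zero x)).eventually
        hball).and (((continuous_const.sub continuous_id).tendsto' 0 x (sub_zero x)).eventually
        hball)
    filter_upwards [hnear] with y ⟨hadd, hsub⟩
    replace hadd := ball_subset_closedBall hadd
    replace hsub := ball_subset_closedBall hsub
    have hZadd := hZ _ hadd s ⟨hs.1.le, hs.2⟩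
    have hZsub := hZ _ hsub s ⟨hs.1.le, hs.2⟩
    have hconcave := hconc.add_le_two_mul hadd hsub
    have hpar := parallelogram_law_with_norm ℝ x y
    simp only [penalizedIncrement] at hZadd hZsub
    nlinarith

end Penalization

theorem time_derivative_propagation_general (n : ℕ)
    (Γ Γt : Eu n → ℝ → ℝ) (M : ℝ) (hM : 0 < M)
    (hcont : ContinuousOn (fun p : Eu n × ℝ => Γ p.1 p.2)
      (closure (ball (0 : Eu n) 1 ×ˢ Ioc (-1 : ℝ) 0)))
    (hconc : ∀ t ∈ Icc (-1 : ℝ) 0, ConcaveOn ℝ (closedBall (0 : Eu n) 1) (fun x => Γ x t))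
    (hmono : ∀ x ∈ closedBall (0 : Eu n) 1, MonotoneOn (fun t => Γ x t) (Icc (-1 : ℝ) 0))
    (hbdry : ∀ p ∈ (sphere (0 : Eu n) 1 ×ˢ Ioc (-1 : ℝ) 0) ∪
        (closedBall (0 : Eu n) 1 ×ˢ ({-1} : Set ℝ)), Γ p.1 p.2 = 0)
    (hC2x : ∀ t ∈ Ioc (-1 : ℝ) 0, ContDiffOn ℝ 2 (fun x => Γ x t) (ball (0 : Eu n) 1))
    (hC1t : ∀ p ∈ ball (0 : Eu n) 1 ×ˢ Ioc (-1 : ℝ) 0,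
      HasDerivWithinAt (fun s => Γ p.1 s) (Γt p.1 p.2) (Iic p.2) p.2)
    (hbound : ∀ p ∈ ball (0 : Eu n) 1 ×ˢ Ioc (-1 : ℝ) 0,
      (hessMat n (fun x => Γ x p.2) p.1).det ≠ 0 → 0 ≤ Γt p.1 p.2 ∧ Γt p.1 p.2 ≤ M) :
    ∀ p ∈ ball (0 : Eu n) 1 ×ˢ Ioc (-1 : ℝ) 0, 0 ≤ Γt p.1 p.2 ∧ Γt p.1 p.2 ≤ 2 * M := by
  rintro ⟨x₀, t₀⟩ ⟨hx₀, ht₀⟩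
  have hΓ := hC1t (x₀, t₀) ⟨hx₀, ht₀⟩
  refine ⟨hΓ.le_of_eventually_le_sub ?_, ?_⟩
  · filter_upwards [Ioo_mem_nhdsLT ht₀.1] with u hu
    simpa using hmono x₀ (ball_subset_closedBall hx₀) ⟨hu.1.le, hu.2.le.trans ht₀.2⟩
      ⟨ht₀.1.le, ht₀.2⟩ hu.2.le
  by_contra! hgt
  obtain ⟨t₁, hgap, ht₁⟩ := ((hΓ.eventually_lt_sub hgt).and (Ioo_mem_nhdsLT ht₀.1)).exists
  have hsub : Icc t₁ t₀ ⊆ Ioc (-1) 0 := Icc_subset_Ioc ht₁.1 ht₀.2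
  have hK : closedBall (0 : Eu n) 1 ×ˢ Icc t₁ t₀ ⊆ closure (ball 0 1 ×ˢ Ioc (-1) 0) := by
    rw [closure_prod_eq, closure_ball 0 one_ne_zero, closure_Ioc (by norm_num)]
    exact prod_mono subset_rfl (hsub.trans Ioc_subset_Icc_self)
  obtain ⟨x, hx, s, hs, htime, c, hc, hspace⟩ :=
    exists_secondDiff_le_and_sub_le (hcont.mono hK) (hconc t₁ ⟨ht₁.1.le, ht₁.2.le.trans ht₀.2⟩)
      (fun y hy s hs => hbdry (y, s) (.inl ⟨hy, hsub hs⟩)) (by positivity) ht₁.2.le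
      (ball_subset_closedBall hx₀) hgap
  have hxs : (x, s) ∈ ball (0 : Eu n) 1 ×ˢ Ioc (-1) 0 := ⟨hx, hsub ⟨hs.1.le, hs.2⟩⟩
  have hdet := hessMat_det_ne_zero_of_secondDiff_le isOpen_ball (hC2x s hxs.2) hx hc hspace
  linarith [(hC1t _ hxs).le_of_eventually_le_sub htime, (hbound _ hxs hdet).2]

/-- Propagation of the time-derivative bound from the contact set. -/
theorem time_derivative_propagation (n : ℕ) (hn : 1 ≤ n) (σ : ℝ) (hσ : σ ∈ Ioo (0 : ℝ) 2)
    (Γ Γt : Eu n → ℝ → ℝ) (M : ℝ) (hM : 0 < M)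
    (hcont : ContinuousOn (fun p : Eu n × ℝ => Γ p.1 p.2)
      (closure (ball (0 : Eu n) 1 ×ˢ Ioc (-1 : ℝ) 0)))
    (hconc : ∀ t ∈ Icc (-1 : ℝ) 0, ConcaveOn ℝ (closedBall (0 : Eu n) 1) (fun x => Γ x t))
    (hmono : ∀ x ∈ closedBall (0 : Eu n) 1, MonotoneOn (fun t => Γ x t) (Icc (-1 : ℝ) 0))
    (hbdry : ∀ p ∈ (sphere (0 : Eu n) 1 ×ˢ Ioc (-1 : ℝ) 0) ∪
        (closedBall (0 : Eu n) 1 ×ˢ ({-1} : Set ℝ)), Γ p.1 p.2 = 0)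
    (hC2x : ∀ t ∈ Ioc (-1 : ℝ) 0, ContDiffOn ℝ 2 (fun x => Γ x t) (ball (0 : Eu n) 1))
    (hC1t : ∀ p ∈ ball (0 : Eu n) 1 ×ˢ Ioc (-1 : ℝ) 0,
      HasDerivWithinAt (fun s => Γ p.1 s) (Γt p.1 p.2) (Iic p.2) p.2)
    (hbound : ∀ p ∈ ball (0 : Eu n) 1 ×ˢ Ioc (-1 : ℝ) 0,
      (hessMat n (fun x => Γ x p.2) p.1).det ≠ 0 → 0 ≤ Γt p.1 p.2 ∧ Γt p.1 p.2 ≤ M) :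
    ∀ p ∈ ball (0 : Eu n) 1 ×ˢ Ioc (-1 : ℝ) 0, 0 ≤ Γt p.1 p.2 ∧ Γt p.1 p.2 ≤ 2 * M :=
  time_derivative_propagation_general n Γ Γt M hM hcont hconc hmono hbdry hC2x hC1t hbound

end
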